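/- arXiv:1802.05374 — 2 statements merged into one kernel-verified Lean document; each statement's English description precedes it below -/
import Mathlib

section
/- If F: R^d → R is continuously differentiable with L-Lipschitz gradient, H is a symmetric positive semidefinite matrix, g is a random vector with E[g] = ∇F(x), and x⁺ = x - αHg, then E[F(x⁺)] ≤ F(x) - α ∇F(x)ᵀ H^{1/2} (I - (Lα/2)(1 + E[‖Hg - H∇F(x)‖²]/‖H∇F(x)‖²) H) H^{1/2} ∇F(x), provided H∇F(x) ≠ 0. -/
open MeasureTheory
open scoped RealInnerProductSpace

/-!
Taylor's bound for an `L`-smooth function, `|F (x + v) - F x - ⟪∇F x, v⟫| ≤ L/2 ‖v‖²`, applied to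
`v = -α H g` and integrated, gives `E F(x⁺) ≤ F x - α ⟪∇F x, H ∇F x⟫ + L α²/2 E‖H g‖²`; its lower
half also makes `F(x⁺)` integrable. The bias–variance identity
`E‖H g‖² = E‖H g - H ∇F x‖² + ‖H ∇F x‖²` and the square root `R` (symmetric, `R² = H`), through
`⟪∇F x, H ∇F x⟫ = ‖R ∇F x‖²` and `‖H ∇F x‖² = ⟪R ∇F x, H R ∇F x⟫`, turn this into the stated bound.
-/

section
variable {E : Type*} [NormedAddCommGroup E] [InnerProductSpace ℝ E] [CompleteSpace E]
  {F : E → ℝ} {L : ℝ} {Ω : Type*} [MeasurableSpace Ω] {μ : Measure Ω} {Y : Ω → E}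

theorem integral_norm_sq_eq_integral_norm_sub_integral_sq_add [IsProbabilityMeasure μ]
    (hY : MemLp Y 2 μ) :
    ∫ ω, ‖Y ω‖ ^ 2 ∂μ = ∫ ω, ‖Y ω - ∫ ω', Y ω' ∂μ‖ ^ 2 ∂μ + ‖∫ ω, Y ω ∂μ‖ ^ 2 := by
  set m := ∫ ω, Y ω ∂μ
  have hYint := hY.integrable one_le_two
  have hYsq := (memLp_two_iff_integrable_sq_norm hY.1).1 hY
  have : ∫ ω, ‖Y ω - m‖ ^ 2 ∂μ = ∫ ω, ‖Y ω‖ ^ 2 ∂μ - ‖m‖ ^ 2 := by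
    simp_rw [norm_sub_sq_real, real_inner_comm m]
    rw [integral_add (hYsq.sub' ((hYint.const_inner m).const_mul 2)) (integrable_const _),
      integral_sub hYsq ((hYint.const_inner m).const_mul 2), integral_const_mul,
      integral_inner hYint, integral_const, real_inner_self_eq_norm_sq]
    simp only [probReal_univ, smul_eq_mul, one_mul]
    ring
  linarith

theorem abs_sub_sub_inner_gradient_le (hF : Differentiable ℝ F)
    (hLip : ∀ y z, ‖gradient F y - gradient F z‖ ≤ L * ‖y - z‖) (x v : E) :
    |F (x + v) - F x - ⟪gradient F x, v⟫| ≤ L / 2 * ‖v‖ ^ 2 := by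
  set φ : ℝ → ℝ := fun t => F (x + t • v) - F x - t * ⟪gradient F x, v⟫
  have hφ : ∀ t, HasDerivAt φ ⟪gradient F (x + t • v) - gradient F x, v⟫ t := by
    intro t
    have hline : HasDerivAt (fun t : ℝ => x + t • v) v t := by
      simpa using ((hasDerivAt_id t).smul_const v).const_add x
    have := (((hF _).hasGradientAt.hasFDerivAt.comp_hasDerivAt t hline).sub_const (F x)).sub
      ((hasDerivAt_id t).mul_const ⟪gradient F x, v⟫)
    refine this.congr_deriv ?_
    rw [InnerProductSpace.toDual_apply_apply, one_mul, inner_sub_left]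
  have hφ_deriv_le : ∀ t ∈ Set.Ico (0 : ℝ) 1,
      ‖⟪gradient F (x + t • v) - gradient F x, v⟫‖ ≤ L * t * ‖v‖ ^ 2 := by
    intro t ht
    calc ‖⟪gradient F (x + t • v) - gradient F x, v⟫‖
        ≤ ‖gradient F (x + t • v) - gradient F x‖ * ‖v‖ := norm_inner_le_norm _ _
      _ ≤ L * ‖x + t • v - x‖ * ‖v‖ := by gcongr; exact hLip _ _
      _ = L * t * ‖v‖ ^ 2 := by
        rw [add_sub_cancel_left, norm_smul, Real.norm_of_nonneg ht.1]; ring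
  have hbound_deriv :
      ∀ t : ℝ, HasDerivAt (fun t => L / 2 * t ^ 2 * ‖v‖ ^ 2) (L * t * ‖v‖ ^ 2) t := by
    intro t
    refine (((hasDerivAt_pow 2 t).const_mul (L / 2)).mul_const (‖v‖ ^ 2)).congr_deriv ?_
    rw [Nat.add_one_sub_one, pow_one, Nat.cast_ofNat]
    ring
  have := image_norm_le_of_norm_deriv_right_le_deriv_boundary
    (fun t _ => (hφ t).continuousAt.continuousWithinAt) (fun t _ => (hφ t).hasDerivWithinAt)
    (by simp [φ]) hbound_deriv hφ_deriv_le (Set.right_mem_Icc.2 zero_le_one)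
  simpa [φ] using this

theorem integrable_comp_add_of_lipschitz_gradient [IsFiniteMeasure μ] (hF : Differentiable ℝ F)
    (hLip : ∀ y z, ‖gradient F y - gradient F z‖ ≤ L * ‖y - z‖) (hY : MemLp Y 2 μ) (x : E) :
    Integrable (fun ω => F (x + Y ω)) μ := by
  refine Integrable.mono' (g := fun ω => |F x + ⟪gradient F x, Y ω⟫| + L / 2 * ‖Y ω‖ ^ 2)
    ?_ (hF.continuous.comp_aestronglyMeasurable (hY.1.const_add x)) (ae_of_all _ fun ω => ?_)
  · exact ((integrable_const _).add ((hY.integrable one_le_two).const_inner _)).abs.add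
      (((memLp_two_iff_integrable_sq_norm hY.1).1 hY).const_mul _)
  · obtain ⟨hlower, hupper⟩ := abs_le.1 (abs_sub_sub_inner_gradient_le hF hLip x (Y ω))
    rw [Real.norm_eq_abs, abs_le]
    constructor <;> linarith [le_abs_self (F x + ⟪gradient F x, Y ω⟫),
      neg_abs_le (F x + ⟪gradient F x, Y ω⟫)]

theorem integral_comp_add_le_of_lipschitz_gradient [IsProbabilityMeasure μ]
    (hF : Differentiable ℝ F) (hLip : ∀ y z, ‖gradient F y - gradient F z‖ ≤ L * ‖y - z‖)
    (hY : MemLp Y 2 μ) (x : E) :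
    ∫ ω, F (x + Y ω) ∂μ ≤ F x + ⟪gradient F x, ∫ ω, Y ω ∂μ⟫ + L / 2 * ∫ ω, ‖Y ω‖ ^ 2 ∂μ := by
  have hYint := hY.integrable one_le_two
  have hYsq := (memLp_two_iff_integrable_sq_norm hY.1).1 hY
  calc ∫ ω, F (x + Y ω) ∂μ
      ≤ ∫ ω, (F x + ⟪gradient F x, Y ω⟫ + L / 2 * ‖Y ω‖ ^ 2) ∂μ := by
        refine integral_mono (integrable_comp_add_of_lipschitz_gradient hF hLip hY x)
          (((integrable_const _).add (hYint.const_inner _)).add (hYsq.const_mul _)) fun ω => ?_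
        linarith [(abs_le.1 (abs_sub_sub_inner_gradient_le hF hLip x (Y ω))).2]
    _ = F x + ⟪gradient F x, ∫ ω, Y ω ∂μ⟫ + L / 2 * ∫ ω, ‖Y ω‖ ^ 2 ∂μ := by
        rw [integral_add ((integrable_const _).fun_add (hYint.const_inner _)) (hYsq.const_mul _),
          integral_add (integrable_const _) (hYint.const_inner _), integral_const,
          integral_const_mul, integral_inner hYint]
        simp

end

theorem expected_decrease_stochastic_quasiNewton_general
    {d : ℕ} {Ω : Type*} [MeasurableSpace Ω] (μ : Measure Ω) [IsProbabilityMeasure μ]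
    (F : EuclideanSpace ℝ (Fin d) → ℝ) (L α : ℝ)
    (hF : ContDiff ℝ 1 F)
    (hLip : ∀ y z, ‖gradient F y - gradient F z‖ ≤ L * ‖y - z‖)
    (H R : EuclideanSpace ℝ (Fin d) →ₗ[ℝ] EuclideanSpace ℝ (Fin d))
    (hRsymm : ∀ u w, ⟪R u, w⟫ = ⟪u, R w⟫)
    (hRsq : ∀ u, R (R u) = H u)
    (x : EuclideanSpace ℝ (Fin d))
    (g : Ω → EuclideanSpace ℝ (Fin d)) (hg2 : MemLp g 2 μ)
    (hmean : ∫ ω, g ω ∂μ = gradient F x)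
    (hne : H (gradient F x) ≠ 0) :
    ∫ ω, F (x - α • H (g ω)) ∂μ
      ≤ F x - α * ⟪R (gradient F x),
          R (gradient F x)
            - (L * α / 2 *
                (1 + (∫ ω, ‖H (g ω) - H (gradient F x)‖ ^ 2 ∂μ)
                      / ‖H (gradient F x)‖ ^ 2)) • H (R (gradient F x))⟫ := by
  set v := gradient F x
  have hHg : MemLp (fun ω => H (g ω)) 2 μ := (LinearMap.toContinuousLinearMap H).comp_memLp' hg2
  have hHg_mean : ∫ ω, H (g ω) ∂μ = H v := by
    rw [← hmean]
    exact (LinearMap.toContinuousLinearMap H).integral_comp_comm (hg2.integrable one_le_two)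
  have hsecond := integral_norm_sq_eq_integral_norm_sub_integral_sq_add hHg
  rw [hHg_mean] at hsecond
  have hRv : ⟪R v, R v⟫ = ⟪v, H v⟫ := by rw [hRsymm, hRsq]
  have hRHRv : ⟪R v, H (R v)⟫ = ‖H v‖ ^ 2 := by
    rw [← hRsq (R v), ← hRsymm, hRsq, real_inner_self_eq_norm_sq]
  have hHv : ‖H v‖ ^ 2 ≠ 0 := by positivity
  calc ∫ ω, F (x - α • H (g ω)) ∂μ
      = ∫ ω, F (x + -(α • H (g ω))) ∂μ := by simp_rw [sub_eq_add_neg]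
    _ ≤ F x + ⟪v, ∫ ω, -(α • H (g ω)) ∂μ⟫ + L / 2 * ∫ ω, ‖-(α • H (g ω))‖ ^ 2 ∂μ :=
        integral_comp_add_le_of_lipschitz_gradient (hF.differentiable one_ne_zero) hLip
          (hHg.const_smul α).neg x
    _ = F x - α * ⟪v, H v⟫ + L / 2 * α ^ 2 * (∫ ω, ‖H (g ω) - H v‖ ^ 2 ∂μ + ‖H v‖ ^ 2) := by
        simp_rw [integral_neg, integral_smul, hHg_mean, norm_neg, norm_smul, mul_pow,
          Real.norm_eq_abs, sq_abs, integral_const_mul, ← hsecond, inner_neg_right,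
          real_inner_smul_right]
        ring
    _ = _ := by
        rw [inner_sub_right, real_inner_smul_right, hRv, hRHRv]
        field_simp
        ring

/-- Expected-decrease inequality for a stochastic quasi-Newton step:
if `∇F` is `L`-Lipschitz, `H` is symmetric PSD with PSD square root `R` (`R ∘ R = H`),
`g` is a square-integrable random vector with `E[g] = ∇F(x)`, and `x⁺ = x - α H g`, then
`E[F(x⁺)] ≤ F(x) - α ⟪R ∇F(x), (I - (Lα/2)(1 + E[‖Hg - H∇F(x)‖²]/‖H∇F(x)‖²) H) R ∇F(x)⟫`. -/
theorem expected_decrease_stochastic_quasiNewton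
    {d : ℕ} {Ω : Type*} [MeasurableSpace Ω] (μ : Measure Ω) [IsProbabilityMeasure μ]
    (F : EuclideanSpace ℝ (Fin d) → ℝ) (L α : ℝ) (hL : 0 < L) (hα : 0 < α)
    (hF : ContDiff ℝ 1 F)
    (hLip : ∀ y z, ‖gradient F y - gradient F z‖ ≤ L * ‖y - z‖)
    (H R : EuclideanSpace ℝ (Fin d) →ₗ[ℝ] EuclideanSpace ℝ (Fin d))
    (hHsymm : ∀ u w, ⟪H u, w⟫ = ⟪u, H w⟫)
    (hHpsd : ∀ u, 0 ≤ ⟪H u, u⟫)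
    (hRsymm : ∀ u w, ⟪R u, w⟫ = ⟪u, R w⟫)
    (hRpsd : ∀ u, 0 ≤ ⟪R u, u⟫)
    (hRsq : ∀ u, R (R u) = H u)
    (x : EuclideanSpace ℝ (Fin d))
    (g : Ω → EuclideanSpace ℝ (Fin d)) (hg2 : MemLp g 2 μ)
    (hmean : ∫ ω, g ω ∂μ = gradient F x)
    (hne : H (gradient F x) ≠ 0)
    (hint : Integrable (fun ω => F (x - α • H (g ω))) μ) :
    ∫ ω, F (x - α • H (g ω)) ∂μ
      ≤ F x - α * ⟪R (gradient F x),
          R (gradient F x)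
            - (L * α / 2 *
                (1 + (∫ ω, ‖H (g ω) - H (gradient F x)‖ ^ 2 ∂μ)
                      / ‖H (gradient F x)‖ ^ 2)) • H (R (gradient F x))⟫ :=
  expected_decrease_stochastic_quasiNewton_general μ F L α hF hLip H R hRsymm hRsq x g hg2 hmean hne
end

section
/- Under the hypotheses of the previous statement (descent in conditional expectation with factor (α/2)‖H_k^{1/2}∇F(x_k)‖², eigenvalue bounds Λ₁I ⪯ H_k ⪯ Λ₂I, and F bounded below), the series Σ_{k=0}^∞ E[‖∇F(x_k)‖²] converges; in particular lim_{k→∞} E[‖∇F(x_k)‖²] = 0. -/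
open MeasureTheory
open scoped RealInnerProductSpace

/-!
Since `H_k^{1/2}` is symmetric, `‖H_k^{1/2} g‖² = ⟪H_k g, g⟫ ≥ Λ₁ ‖g‖²`, so taking total
expectations in the descent condition gives `E F(x_{k+1}) + (α Λ₁ / 2) E‖∇F(x_k)‖² ≤ E F(x_k)`.
Telescoping, the partial sums of `(α Λ₁ / 2) E‖∇F(x_k)‖²` are bounded by `F(x_0) - F_min`.
-/

theorem LinearMap.IsSymmetric.norm_apply_sq_eq_inner {E : Type*} [NormedAddCommGroup E]
    [InnerProductSpace ℝ E] {S : E →ₗ[ℝ] E} (hS : S.IsSymmetric) (u : E) :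
    ‖S u‖ ^ 2 = ⟪S (S u), u⟫ := by
  rw [← real_inner_self_eq_norm_sq, hS, real_inner_comm]

theorem summable_of_succ_add_le {a b : ℕ → ℝ} {m : ℝ} (hb : ∀ k, 0 ≤ b k)
    (hstep : ∀ k, a (k + 1) + b k ≤ a k) (hbdd : ∀ k, m ≤ a k) : Summable b := by
  refine summable_of_sum_range_le (c := a 0 - m) hb fun n => ?_
  calc ∑ k ∈ Finset.range n, b k
      ≤ ∑ k ∈ Finset.range n, (a k - a (k + 1)) :=
        Finset.sum_le_sum fun k _ => by linarith [hstep k]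
    _ = a 0 - a n := Finset.sum_range_sub' a n
    _ ≤ a 0 - m := by linarith [hbdd n]

theorem integral_add_le_of_condExp_le_sub {Ω : Type*} {m m0 : MeasurableSpace Ω}
    {μ : Measure Ω} (hm : m ≤ m0) [SigmaFinite (μ.trim hm)] {f g h : Ω → ℝ}
    (hg : Integrable g μ) (hh : Integrable h μ) (hcond : μ[f | m] ≤ᵐ[μ] g - h) :
    ∫ ω, f ω ∂μ + ∫ ω, h ω ∂μ ≤ ∫ ω, g ω ∂μ := by
  have hle : ∫ ω, (μ[f | m]) ω ∂μ ≤ ∫ ω, (g - h) ω ∂μ :=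
    integral_mono_ae integrable_condExp (hg.sub hh) hcond
  rw [integral_condExp hm, Pi.sub_def, integral_sub hg hh] at hle
  linarith

theorem gradient_norms_summable_nonconvex_general
    {d : ℕ} {Ω : Type*} {m0 : MeasurableSpace Ω} (μ : Measure Ω) [IsProbabilityMeasure μ]
    (𝓕 : Filtration ℕ m0) [∀ k, SigmaFinite (μ.trim (𝓕.le k))]
    (F : EuclideanSpace ℝ (Fin d) → ℝ) (Fmin Λ₁ Λ₂ α : ℝ)
    (hΛ₁ : 0 < Λ₁) (hα : 0 < α)
    (hbdd : ∀ y, Fmin ≤ F y)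
    (x : ℕ → Ω → EuclideanSpace ℝ (Fin d))
    (H Hhalf : ℕ → Ω → (EuclideanSpace ℝ (Fin d) →ₗ[ℝ] EuclideanSpace ℝ (Fin d)))
    (hHeig : ∀ k ω u, Λ₁ * ‖u‖ ^ 2 ≤ ⟪H k ω u, u⟫ ∧ ⟪H k ω u, u⟫ ≤ Λ₂ * ‖u‖ ^ 2)
    (hHhalfsymm : ∀ k ω u w, ⟪Hhalf k ω u, w⟫ = ⟪u, Hhalf k ω w⟫)
    (hHhalfsq : ∀ k ω u, Hhalf k ω (Hhalf k ω u) = H k ω u)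
    (hint : ∀ k, Integrable (fun ω => F (x k ω)) μ)
    (hint2 : ∀ k, Integrable (fun ω => ‖gradient F (x k ω)‖ ^ 2) μ)
    (hdesc : ∀ k, μ[(fun ω => F (x (k + 1) ω)) | 𝓕 k]
      ≤ᵐ[μ] fun ω => F (x k ω) - α / 2 * ‖Hhalf k ω (gradient F (x k ω))‖ ^ 2) :
    Summable (fun k => ∫ ω, ‖gradient F (x k ω)‖ ^ 2 ∂μ) ∧
      Filter.Tendsto (fun k => ∫ ω, ‖gradient F (x k ω)‖ ^ 2 ∂μ)
        Filter.atTop (nhds 0) := by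
  set c := α * Λ₁ / 2 with hc_def
  have hc : 0 < c := by positivity
  have hHhalf_lower : ∀ k ω u, Λ₁ * ‖u‖ ^ 2 ≤ ‖Hhalf k ω u‖ ^ 2 := fun k ω u => by
    rw [LinearMap.IsSymmetric.norm_apply_sq_eq_inner (hHhalfsymm k ω), hHhalfsq]
    exact (hHeig k ω u).1
  have hstep : ∀ k, ∫ ω, F (x (k + 1) ω) ∂μ + ∫ ω, c * ‖gradient F (x k ω)‖ ^ 2 ∂μ
      ≤ ∫ ω, F (x k ω) ∂μ := fun k =>
    integral_add_le_of_condExp_le_sub (𝓕.le k) (hint k) ((hint2 k).const_mul c) <| by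
      filter_upwards [hdesc k] with ω hω
      have hscaled := mul_le_mul_of_nonneg_left (hHhalf_lower k ω (gradient F (x k ω)))
        (by positivity : (0 : ℝ) ≤ α / 2)
      simp only [Pi.sub_apply, hc_def]
      linarith
  have hlower : ∀ k, Fmin ≤ ∫ ω, F (x k ω) ∂μ := fun k => by
    simpa using integral_mono (integrable_const Fmin) (hint k) fun ω => hbdd (x k ω)
  have hsummable : Summable fun k => ∫ ω, ‖gradient F (x k ω)‖ ^ 2 ∂μ := by
    refine (summable_mul_left_iff hc.ne').mp ?_
    simp_rw [← integral_const_mul]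
    exact summable_of_succ_add_le (fun k => integral_nonneg fun ω => by positivity) hstep hlower
  exact ⟨hsummable, hsummable.tendsto_atTop_zero⟩

/-- Under the conditional expected-decrease condition with eigenvalue bounds on `H_k`
and `F` bounded below, the series `Σ_k E[‖∇F(x_k)‖²]` converges; in particular
`E[‖∇F(x_k)‖²] → 0`. -/
theorem gradient_norms_summable_nonconvex
    {d : ℕ} {Ω : Type*} {m0 : MeasurableSpace Ω} (μ : Measure Ω) [IsProbabilityMeasure μ]
    (𝓕 : Filtration ℕ m0) [∀ k, SigmaFinite (μ.trim (𝓕.le k))]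
    (F : EuclideanSpace ℝ (Fin d) → ℝ) (Fmin Λ₁ Λ₂ α : ℝ)
    (hΛ₁ : 0 < Λ₁) (hΛ : Λ₁ ≤ Λ₂) (hα : 0 < α)
    (hF : ContDiff ℝ 2 F) (hbdd : ∀ y, Fmin ≤ F y)
    (x : ℕ → Ω → EuclideanSpace ℝ (Fin d)) (hadapted : Adapted 𝓕 x)
    (x0 : EuclideanSpace ℝ (Fin d)) (hx0 : ∀ ω, x 0 ω = x0)
    (H Hhalf : ℕ → Ω → (EuclideanSpace ℝ (Fin d) →ₗ[ℝ] EuclideanSpace ℝ (Fin d)))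
    (hHsymm : ∀ k ω u w, ⟪H k ω u, w⟫ = ⟪u, H k ω w⟫)
    (hHeig : ∀ k ω u, Λ₁ * ‖u‖ ^ 2 ≤ ⟪H k ω u, u⟫ ∧ ⟪H k ω u, u⟫ ≤ Λ₂ * ‖u‖ ^ 2)
    (hHhalfsymm : ∀ k ω u w, ⟪Hhalf k ω u, w⟫ = ⟪u, Hhalf k ω w⟫)
    (hHhalfsq : ∀ k ω u, Hhalf k ω (Hhalf k ω u) = H k ω u)
    (hint : ∀ k, Integrable (fun ω => F (x k ω)) μ)
    (hint2 : ∀ k, Integrable (fun ω => ‖gradient F (x k ω)‖ ^ 2) μ)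
    (hdesc : ∀ k, μ[(fun ω => F (x (k + 1) ω)) | 𝓕 k]
      ≤ᵐ[μ] fun ω => F (x k ω) - α / 2 * ‖Hhalf k ω (gradient F (x k ω))‖ ^ 2) :
    Summable (fun k => ∫ ω, ‖gradient F (x k ω)‖ ^ 2 ∂μ) ∧
      Filter.Tendsto (fun k => ∫ ω, ‖gradient F (x k ω)‖ ^ 2 ∂μ)
        Filter.atTop (nhds 0) :=
  gradient_norms_summable_nonconvex_general μ 𝓕 F Fmin Λ₁ Λ₂ α hΛ₁ hα hbdd x H Hhalf hHeig
    hHhalfsymm hHhalfsq hint hint2 hdesc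
end
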